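/- Let n, t with 1 ≤ t < n−1, s : Fin n → ℝ nonnegative nonincreasing with s 1 > 0. Suppose v : Fin n → ℝ is nonnegative, nonincreasing, feasible, and minimizes ∑_i v i among feasible nonincreasing nonnegative vectors. Then the first constraint is tight: v 1 + ∑_{i=t+2}^{n} v i = s 1. -/

import Mathlib

/-!
For antitone `s` and `v` the only binding constraints are those with `A = {0, …, t} \ {j}`,
`j ≤ t`, i.e. `s j ≤ v j + ∑_{i > t} v i`: for any admissible `A` the complement of `A` sums to at
least this when `j ≤ t`, and for `j > t` to at least the sum of the last `n - t` entries, which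
bounds `s t ≥ s j`. If the constraint at `j = 0` were slack, capping `v` at `v 0 - ε` for small
`ε > 0` would keep it nonnegative, antitone and feasible while lowering its sum, contradicting
minimality.
-/

open Finset

namespace Finset

variable {ι M : Type*} [DecidableEq ι] [AddCommMonoid M] [LinearOrder M] [IsOrderedAddMonoid M]

theorem sum_le_sum_of_card_eq_of_forall_sdiff_le {s t : Finset ι} (f : ι → M) (hcard : #s = #t)
    (h : ∀ a ∈ s \ t, ∀ b ∈ t \ s, f a ≤ f b) : ∑ i ∈ s, f i ≤ ∑ i ∈ t, f i := by
  rw [← sum_inter_add_sum_sdiff s t, ← sum_inter_add_sum_sdiff t s, inter_comm]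
  refine add_le_add le_rfl ?_
  rcases (t \ s).eq_empty_or_nonempty with hts | hts
  · have hst : s \ t = ∅ :=
      card_eq_zero.mp ((card_sdiff_comm hcard).trans (by rw [hts, card_empty]))
    rw [hst, hts]
  · obtain ⟨b₀, hb₀, hmin⟩ := exists_min_image (t \ s) f hts
    calc ∑ i ∈ s \ t, f i ≤ #(s \ t) • f b₀ := sum_le_card_nsmul _ _ _ fun a ha => h a ha b₀ hb₀
      _ = #(t \ s) • f b₀ := by rw [card_sdiff_comm hcard]
      _ ≤ ∑ i ∈ t \ s, f i := card_nsmul_le_sum _ _ _ hmin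

end Finset

namespace Fin

theorem card_filter_le_val (n k : ℕ) : #{i : Fin n | k ≤ (i : ℕ)} = n - k := by
  have hsplit := card_filter_add_card_filter_not (s := (univ : Finset (Fin n)))
    (fun i : Fin n => (i : ℕ) < k)
  simp only [card_filter_val_lt, not_lt, card_univ, Fintype.card_fin] at hsplit
  omega

variable {n : ℕ} {M : Type*} [AddCommMonoid M]

theorem sum_filter_le_val_eq_add (w : Fin n → M) {k : ℕ} (hk : k < n) :
    ∑ i ∈ univ.filter (fun i : Fin n => k ≤ i.val), w i
      = w ⟨k, hk⟩ + ∑ i ∈ univ.filter (fun i : Fin n => k + 1 ≤ i.val), w i := by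
  rw [← sum_insert (by simp)]
  congr 1
  ext i
  simp only [mem_filter, mem_univ, true_and, mem_insert, Fin.ext_iff]
  omega

variable [LinearOrder M] [IsOrderedAddMonoid M]

theorem sum_filter_le_val_le_sum {w : Fin n → M} (hw : Antitone w) {k : ℕ} (S : Finset (Fin n))
    (hS : #S + k = n) : ∑ i ∈ univ.filter (fun i : Fin n => k ≤ i.val), w i ≤ ∑ i ∈ S, w i := by
  refine sum_le_sum_of_card_eq_of_forall_sdiff_le w (by rw [card_filter_le_val]; omega) ?_
  intro a ha b hb
  simp only [mem_sdiff, mem_filter, mem_univ, true_and, not_le] at ha hb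
  exact hw (Fin.le_def.2 (by omega))

end Fin

section Feasibility

variable {n : ℕ} (t : ℕ)

/-- The sum of the `n - t - 1` smallest entries of an antitone vector. -/
def tailSum (w : Fin n → ℝ) : ℝ := ∑ i ∈ univ.filter (fun i : Fin n => t + 1 ≤ i.val), w i

def IsFeasible (s w : Fin n → ℝ) : Prop :=
  ∀ (j : Fin n) (A : Finset (Fin n)), #A = t → j ∉ A → s j ≤ ∑ i ∈ Aᶜ, w i

variable {t}

theorem isFeasible_iff {s w : Fin n → ℝ} (hs : Antitone s) (hw : Antitone w) (htn : t < n) :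
    IsFeasible t s w ↔ ∀ j : Fin n, j.val ≤ t → s j ≤ w j + tailSum t w := by
  constructor
  · intro hfeas j hj
    have hjA : j ∈ Iic (⟨t, htn⟩ : Fin n) := mem_Iic.2 (Fin.le_def.2 hj)
    have hA : #((Iic (⟨t, htn⟩ : Fin n)).erase j) = t := by
      rw [card_erase_of_mem hjA, Fin.card_Iic]; rfl
    have hcompl : ((Iic (⟨t, htn⟩ : Fin n)).erase j)ᶜ
        = insert j (univ.filter (fun i : Fin n => t + 1 ≤ i.val)) := by
      ext i
      simp only [mem_compl, mem_erase, mem_Iic, mem_insert, mem_filter, mem_univ, true_and,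
        Fin.le_def, Fin.ext_iff]
      omega
    have h := hfeas j _ hA (notMem_erase j _)
    rwa [hcompl, sum_insert (by simp only [mem_filter, mem_univ, true_and]; omega)] at h
  · intro hle j A hA hj
    rcases le_or_gt j.val t with hjt | htj
    · calc s j ≤ w j + tailSum t w := hle j hjt
        _ ≤ w j + ∑ i ∈ Aᶜ.erase j, w i := by
          gcongr
          refine Fin.sum_filter_le_val_le_sum hw _ ?_
          rw [card_erase_of_mem (mem_compl.2 hj), card_compl, hA, Fintype.card_fin]
          omega
        _ = ∑ i ∈ Aᶜ, w i := add_sum_erase _ _ (mem_compl.2 hj)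
    · calc s j ≤ s ⟨t, htn⟩ := hs (Fin.le_def.2 htj.le)
        _ ≤ w ⟨t, htn⟩ + tailSum t w := hle _ le_rfl
        _ = ∑ i ∈ univ.filter (fun i : Fin n => t ≤ i.val), w i :=
          (Fin.sum_filter_le_val_eq_add w htn).symm
        _ ≤ ∑ i ∈ Aᶜ, w i := by
          refine Fin.sum_filter_le_val_le_sum hw _ ?_
          rw [card_compl, hA, Fintype.card_fin]
          omega

/-- Capping `v` at `v 0 - ε` leaves every binding constraint either unchanged (when `v j` is below
the cap, so is the whole tail) or reduced by at most `(m + 1) ε`, `m` the length of the tail. -/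
theorem IsFeasible.min_const {s v : Fin n → ℝ} (hs : Antitone s) (hv : Antitone v) (htn : t < n)
    (hfeas : IsFeasible t s v) {ε : ℝ} (hε : 0 ≤ ε)
    (hslack : s ⟨0, by omega⟩ + (#(univ.filter (fun i : Fin n => t + 1 ≤ i.val)) + 1) * ε
      ≤ v ⟨0, by omega⟩ + tailSum t v) :
    IsFeasible t s fun i => min (v i) (v ⟨0, by omega⟩ - ε) := by
  set z : Fin n := ⟨0, by omega⟩
  have hz : ∀ i, z ≤ i := fun i => Fin.le_def.2 (Nat.zero_le _)
  set m := #(univ.filter (fun i : Fin n => t + 1 ≤ i.val))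
  set w : Fin n → ℝ := fun i => min (v i) (v z - ε)
  have hv_feas := (isFeasible_iff hs hv htn).1 hfeas
  rw [isFeasible_iff hs (hv.min antitone_const) htn]
  intro j hj
  by_cases hcap : v j ≤ v z - ε
  · have htail : tailSum t w = tailSum t v := sum_congr rfl fun i hi => min_eq_left <|
      (hv (Fin.le_def.2 (by simp only [mem_filter, mem_univ, true_and] at hi; omega))).trans hcap
    calc s j ≤ v j + tailSum t v := hv_feas j hj
      _ = w j + tailSum t w := by rw [htail, show w j = v j from min_eq_left hcap]
  · have hwj : w j = v z - ε := min_eq_right (le_of_not_ge hcap)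
    have htail : tailSum t v - m * ε ≤ tailSum t w := by
      calc tailSum t v - m * ε
          = ∑ i ∈ univ.filter (fun i : Fin n => t + 1 ≤ i.val), (v i - ε) := by
            rw [sum_sub_distrib, Finset.sum_const, nsmul_eq_mul]; rfl
        _ ≤ tailSum t w := sum_le_sum fun i _ => le_min (by linarith) (by linarith [hv (hz i)])
    calc s j ≤ s z := hs (hz j)
      _ ≤ v z - ε + (tailSum t v - m * ε) := by linarith
      _ ≤ w j + tailSum t w := by rw [hwj]; gcongr

theorem exists_isFeasible_sum_lt {s v : Fin n → ℝ} (hs : Antitone s) (hv₀ : ∀ i, 0 ≤ v i)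
    (hv : Antitone v) (htn : t < n) (hs₀ : 0 < s ⟨0, by omega⟩) (hfeas : IsFeasible t s v)
    (hslack : s ⟨0, by omega⟩ < v ⟨0, by omega⟩ + tailSum t v) :
    ∃ w : Fin n → ℝ, (∀ i, 0 ≤ w i) ∧ Antitone w ∧ IsFeasible t s w ∧ ∑ i, w i < ∑ i, v i := by
  set z : Fin n := ⟨0, by omega⟩
  set m := #(univ.filter (fun i : Fin n => t + 1 ≤ i.val))
  have hvz : 0 < v z := by
    by_contra! h
    have : tailSum t v ≤ 0 := sum_nonpos fun i _ => (hv (Fin.le_def.2 (Nat.zero_le _))).trans h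
    linarith
  set ε := min (v z) ((v z + tailSum t v - s z) / (m + 1))
  have hε : 0 < ε := lt_min hvz (div_pos (by linarith) (by positivity))
  have hεv : ε ≤ v z := min_le_left _ _
  have hεm : s z + (m + 1) * ε ≤ v z + tailSum t v := by
    have : (m + 1) * ε ≤ (m + 1) * ((v z + tailSum t v - s z) / (m + 1)) := by
      gcongr; exact min_le_right _ _
    rw [mul_div_cancel₀ _ (by positivity)] at this
    linarith
  refine ⟨_, fun i => le_min (hv₀ i) (by linarith), hv.min antitone_const,
    hfeas.min_const hs hv htn hε.le hεm, ?_⟩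
  exact sum_lt_sum (fun i _ => min_le_left _ _) ⟨z, mem_univ _, min_lt_of_right_lt (by linarith)⟩

end Feasibility

theorem stmt4 (n t : ℕ) (htn : t + 1 < n)
    (s : Fin n → ℝ)
    (hsmono : ∀ i j : Fin n, i ≤ j → s j ≤ s i)
    (hs1 : 0 < s ⟨0, by omega⟩)
    (v : Fin n → ℝ) (hv0 : ∀ i, 0 ≤ v i)
    (hvmono : ∀ i j : Fin n, i ≤ j → v j ≤ v i)
    (hfeas : ∀ (j : Fin n) (A : Finset (Fin n)), A.card = t → j ∉ A →
      s j ≤ ∑ i ∈ Aᶜ, v i)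
    (hopt : ∀ w : Fin n → ℝ, (∀ i, 0 ≤ w i) →
      (∀ i j : Fin n, i ≤ j → w j ≤ w i) →
      (∀ (j : Fin n) (A : Finset (Fin n)), A.card = t → j ∉ A →
        s j ≤ ∑ i ∈ Aᶜ, w i) →
      ∑ i, v i ≤ ∑ i, w i) :
    v ⟨0, by omega⟩ + ∑ i ∈ Finset.univ.filter (fun i : Fin n => t + 1 ≤ i.val), v i
      = s ⟨0, by omega⟩ := by
  have hs : Antitone s := fun i j h => hsmono i j h
  have hv : Antitone v := fun i j h => hvmono i j h
  refine le_antisymm ?_ ((isFeasible_iff hs hv (by omega)).1 hfeas _ (Nat.zero_le t))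
  by_contra! hslack
  obtain ⟨w, hw₀, hw, hwfeas, hlt⟩ :=
    exists_isFeasible_sum_lt hs hv0 hv (by omega) hs1 hfeas hslack
  exact (hopt w hw₀ (fun i j h => hw h) hwfeas).not_gt hlt
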